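/- Let n ≥ 3, let 1 < p < ∞ with 1/p + 1/q = 1, and let γ < (n−1) + p. Let f be a Lebesgue measurable function on R^{n−1} with ∫_{R^{n−1}} |f(y')|^p/(1+|y'|)^γ dy' < ∞. For x ∈ H with |x| ≥ 2 define v_3(x) = ∫_{{y' ∈ R^{n−1} : |y'| > 2|x|}} P(x, y') f(y') dy'. Then there is a constant A depending only on n, p, γ such that |v_3(x)| ≤ A x_n |x|^{γ/p + (n−1)/q − n} ( ∫_{|y'| > 2|x|} |f(y')|^p/|y'|^γ dy' )^{1/p}, and consequently v_3(x) = o( x_n |x|^{γ/p + (n−1)/q − n} ) as |x| → ∞, x ∈ H. -/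

import Mathlib

open MeasureTheory Filter Metric Asymptotics ENNReal

/-- The last coordinate `x_n` of a point `x ∈ ℝⁿ`. -/
noncomputable def lastCoord {n : ℕ} (x : EuclideanSpace ℝ (Fin n)) : ℝ :=
  if h : 0 < n then x ⟨n - 1, Nat.sub_lt h one_pos⟩ else 0

/-- The upper half-space `H = {x ∈ ℝⁿ : x_n > 0}`. -/
def upperHalfSpace (n : ℕ) : Set (EuclideanSpace ℝ (Fin n)) :=
  {x | 0 < lastCoord x}

/-- `ω_n = 2 π^{n/2} / Γ(n/2)`, the surface area of the unit sphere in ℝⁿ. -/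
noncomputable def surfaceArea (n : ℕ) : ℝ :=
  2 * Real.pi ^ ((n : ℝ) / 2) / Real.Gamma ((n : ℝ) / 2)

/-- The embedding `y' ↦ (y', 0)` of `ℝ^{n-1}` into `ℝⁿ`. -/
noncomputable def extendBdry {n : ℕ} (y' : EuclideanSpace ℝ (Fin (n - 1))) :
    EuclideanSpace ℝ (Fin n) :=
  (EuclideanSpace.equiv (Fin n) ℝ).symm
    (fun i => if h : (i : ℕ) < n - 1 then y' ⟨(i : ℕ), h⟩ else 0)

/-- The Poisson kernel `P(x, y') = 2 x_n / (ω_n |x - (y',0)|^n)` of the half-space. -/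
noncomputable def halfSpacePoissonKernel (n : ℕ) (x : EuclideanSpace ℝ (Fin n))
    (y' : EuclideanSpace ℝ (Fin (n - 1))) : ℝ :=
  2 * lastCoord x / (surfaceArea n * ‖x - extendBdry y'‖ ^ n)

/-- The Poisson integral `v(x) = ∫_{ℝ^{n-1}} P(x,y') f(y') dy'`. -/
noncomputable def poissonIntegral (n : ℕ) (f : EuclideanSpace ℝ (Fin (n - 1)) → ℝ)
    (x : EuclideanSpace ℝ (Fin n)) : ℝ :=
  ∫ y', halfSpacePoissonKernel n x y' * f y'

/-- The reflection `y* = (y', -y_n)` of `y` in the boundary hyperplane. -/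
noncomputable def reflectPt {n : ℕ} (y : EuclideanSpace ℝ (Fin n)) :
    EuclideanSpace ℝ (Fin n) :=
  (EuclideanSpace.equiv (Fin n) ℝ).symm
    (fun i => if (i : ℕ) = n - 1 then -(y i) else y i)

/-- The Green function `G(x,y) = r_n (|x - y*|^{2-n} - |x - y|^{2-n})` of the
half-space, where `r_n = 1/((n-2) ω_n)`. -/
noncomputable def greenFn (n : ℕ) (x y : EuclideanSpace ℝ (Fin n)) : ℝ :=
  (1 / (((n : ℝ) - 2) * surfaceArea n)) *
    (‖x - reflectPt y‖ ^ ((2 : ℝ) - n) - ‖x - y‖ ^ ((2 : ℝ) - n))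

/-- The Green potential `h(x) = ∫_H G(x,y) dμ(y)`. -/
noncomputable def greenPotential (n : ℕ) (μ : Measure (EuclideanSpace ℝ (Fin n)))
    (x : EuclideanSpace ℝ (Fin n)) : ℝ :=
  ∫ y in upperHalfSpace n, greenFn n x y ∂μ

/-- The maximal function of order `β` of a Borel measure `μ`:
`M(dμ)(x) = sup_{0<r<∞} μ(B(x,r))/r^β`. -/
noncomputable def maxFn {n : ℕ} (μ : Measure (EuclideanSpace ℝ (Fin n))) (β : ℝ)
    (x : EuclideanSpace ℝ (Fin n)) : ℝ≥0∞ :=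
  ⨆ (r : ℝ) (_ : 0 < r), μ (Metric.ball x r) / ENNReal.ofReal (r ^ β)

/-!
For `‖y'‖ > 2‖x‖` one has `‖x - (y', 0)‖ ≥ ‖y'‖ / 2`, hence
`P(x, y') ≤ 2^(n+1) x_n / (ω_n ‖y'‖^n)`. Splitting `‖y'‖^(-n) = ‖y'‖^(-γ/p) ‖y'‖^(γ/p - n)`,
Hölder's inequality bounds `|v₃(x)|` by
`x_n (∫ |f|^p / ‖y'‖^γ)^(1/p) (∫_{‖y'‖ > 2‖x‖} ‖y'‖^((γ/p - n) q))^(1/q)`.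
In polar coordinates the last integral is a constant times `‖x‖^((γ/p - n) q + n - 1)`, and it
is finite exactly because `γ < n - 1 + p`. The first factor is the tail of an integral that is
finite by comparison with `∫ |f|^p / (1 + ‖y'‖)^γ`, so it tends to `0`: this is the `o`-estimate.
-/

open Topology Set Module

theorem setLIntegral_norm_rpow_norm_gt {E : Type*} [NormedAddCommGroup E] [NormedSpace ℝ E]
    [Nontrivial E] [FiniteDimensional ℝ E] [MeasurableSpace E] [BorelSpace E]
    (μ : Measure E) [μ.IsAddHaarMeasure] {e R : ℝ} (he : e + finrank ℝ E < 0) (hR : 0 < R) :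
    ∫⁻ y in {y | R < ‖y‖}, ENNReal.ofReal (‖y‖ ^ e) ∂μ =
      ENNReal.ofReal (finrank ℝ E * μ.real (ball 0 1) / -(e + finrank ℝ E) *
        R ^ (e + finrank ℝ E)) := by
  set d := finrank ℝ E
  set g : ℝ → ℝ := (Ioi R).indicator (· ^ e)
  have hd : 0 < d := finrank_pos
  have hradial :
      ∀ t ∈ Ioi (0 : ℝ), t ^ (d - 1) • g t = (Ioi R).indicator (· ^ (e + d - 1)) t := by
    intro t (ht : 0 < t)
    by_cases htR : R < t
    · simp only [g, indicator_of_mem (show t ∈ Ioi R from htR), smul_eq_mul]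
      rw [← Real.rpow_natCast, Nat.cast_pred hd, ← Real.rpow_add ht]
      ring_nf
    · simp [g, htR]
  have hpow : IntegrableOn (· ^ (e + d - 1)) (Ioi R) :=
    integrableOn_Ioi_rpow_of_lt (by linarith) hR
  have hint : Integrable (fun y : E ↦ g ‖y‖) μ := by
    rw [integrable_fun_norm_addHaar, integrableOn_congr_fun hradial measurableSet_Ioi]
    exact ((integrable_indicator_iff measurableSet_Ioi).2 hpow).integrableOn
  have hset : ∫⁻ y in {y | R < ‖y‖}, ENNReal.ofReal (‖y‖ ^ e) ∂μ =
      ∫⁻ y, ENNReal.ofReal (g ‖y‖) ∂μ := by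
    rw [← lintegral_indicator (measurableSet_lt measurable_const measurable_norm)]
    congr 1 with y
    by_cases h : R < ‖y‖ <;> simp [g, h]
  have hg : ∀ t, 0 ≤ g t :=
    indicator_nonneg fun t (ht : R < t) ↦ Real.rpow_nonneg (hR.trans ht).le e
  rw [hset, ← ofReal_integral_eq_lintegral_ofReal hint (.of_forall fun y ↦ hg ‖y‖),
    integral_fun_norm_addHaar, setIntegral_congr_fun measurableSet_Ioi hradial,
    setIntegral_indicator measurableSet_Ioi, Ioi_inter_Ioi, sup_eq_right.2 hR.le,
    integral_Ioi_rpow_of_lt (by linarith) hR]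
  congr 1
  simp only [nsmul_eq_mul, smul_eq_mul, sub_add_cancel, d]
  rw [div_neg]
  ring

theorem exists_setLIntegral_norm_rpow_norm_gt_eq {m : ℕ} (hm : 0 < m) {e : ℝ}
    (he : e + m < 0) :
    ∃ C : ℝ, 0 < C ∧ ∀ R : ℝ, 0 < R →
      ∫⁻ y in {y : EuclideanSpace ℝ (Fin m) | R < ‖y‖}, ENNReal.ofReal (‖y‖ ^ e) =
        ENNReal.ofReal (C * R ^ (e + m)) := by
  have : NeZero m := ⟨hm.ne'⟩
  have hdim : (finrank ℝ (EuclideanSpace ℝ (Fin m)) : ℝ) = m := by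
    rw [finrank_euclideanSpace_fin]
  have hball : 0 < volume.real (ball (0 : EuclideanSpace ℝ (Fin m)) 1) :=
    ENNReal.toReal_pos (measure_ball_pos _ _ one_pos).ne' measure_ball_lt_top.ne
  refine ⟨m * volume.real (ball (0 : EuclideanSpace ℝ (Fin m)) 1) / -(e + m),
    div_pos (by positivity) (by linarith), fun R hR ↦ ?_⟩
  have := setLIntegral_norm_rpow_norm_gt (volume : Measure (EuclideanSpace ℝ (Fin m)))
    (e := e) (by rwa [hdim]) hR
  rwa [hdim] at this

theorem tendsto_setLIntegral_norm_gt_atTop {E : Type*} [NormedAddCommGroup E]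
    [MeasurableSpace E] [OpensMeasurableSpace E] (μ : Measure E) (g : E → ℝ≥0∞) {R₀ : ℝ}
    (h : ∫⁻ y in {y | R₀ < ‖y‖}, g y ∂μ ≠ ⊤) :
    Tendsto (fun R : ℝ ↦ ∫⁻ y in {y | R < ‖y‖}, g y ∂μ) atTop (𝓝 0) := by
  have hmeas : ∀ R : ℝ, MeasurableSet {y : E | R < ‖y‖} :=
    fun R ↦ measurableSet_lt measurable_const measurable_norm
  have hanti : Antitone fun R : ℝ ↦ {y : E | R < ‖y‖} :=
    fun R R' hRR' y (hy : R' < ‖y‖) ↦ show R < ‖y‖ from hRR'.trans_lt hy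
  have hempty : ⋂ R : ℝ, {y : E | R < ‖y‖} = ∅ :=
    eq_empty_of_forall_notMem fun y hy ↦ lt_irrefl ‖y‖ (mem_iInter.1 hy ‖y‖)
  have := tendsto_measure_iInter_atTop (μ := μ.withDensity g)
    (fun R ↦ (hmeas R).nullMeasurableSet) hanti
    ⟨R₀, by rwa [withDensity_apply _ (hmeas R₀)]⟩
  rw [hempty, measure_empty] at this
  exact this.congr fun R ↦ withDensity_apply _ (hmeas R)

theorem Asymptotics.isLittleO_of_abs_le_mul_of_tendsto_zero {α : Type*} {l : Filter α}
    {u g h : α → ℝ} (A : ℝ) (hb : ∀ᶠ x in l, |u x| ≤ A * g x * h x)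
    (hh : Tendsto h l (𝓝 0)) : u =o[l] g := by
  have hO : u =O[l] (g * h) := .of_bound |A| <| hb.mono fun x hx ↦ by
    simp only [Real.norm_eq_abs, Pi.mul_apply, ← abs_mul, ← mul_assoc]
    exact hx.trans (le_abs_self _)
  simpa only [mul_one] using hO.trans_isLittleO ((isBigO_refl g l).mul_isLittleO ((isLittleO_one_iff ℝ).2 hh))

theorem ENNReal.tendsto_toReal_rpow_zero {α : Type*} {l : Filter α} {u : α → ℝ≥0∞}
    (hu : Tendsto u l (𝓝 0)) {r : ℝ} (hr : 0 < r) :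
    Tendsto (fun x ↦ (u x).toReal ^ r) l (𝓝 0) := by
  have := (Real.continuousAt_rpow_const 0 r (Or.inr hr.le)).tendsto.comp
    ((ENNReal.tendsto_toReal ENNReal.zero_ne_top).comp hu)
  rwa [Real.zero_rpow hr.ne'] at this

theorem one_add_rpow_le_max_mul_rpow {t : ℝ} (ht : 1 ≤ t) (γ : ℝ) :
    (1 + t) ^ γ ≤ max 1 (2 ^ γ) * t ^ γ := by
  have ht0 : 0 < t := one_pos.trans_le ht
  rcases le_total 0 γ with hγ | hγ
  · calc (1 + t) ^ γ ≤ (2 * t) ^ γ := by gcongr; linarith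
      _ = 2 ^ γ * t ^ γ := Real.mul_rpow zero_le_two ht0.le
      _ ≤ max 1 (2 ^ γ) * t ^ γ := by gcongr; exact le_max_right _ _
  · calc (1 + t) ^ γ ≤ t ^ γ := Real.rpow_le_rpow_of_nonpos ht0 (by linarith) hγ
      _ ≤ max 1 (2 ^ γ) * t ^ γ := le_mul_of_one_le_left (by positivity) (le_max_left _ _)

theorem setLIntegral_norm_gt_one_div_rpow_lt_top {E : Type*} [NormedAddCommGroup E]
    [MeasurableSpace E] [OpensMeasurableSpace E] {μ : Measure E} {g : E → ℝ}
    (hg : ∀ y, 0 ≤ g y) {γ : ℝ} (h : ∫⁻ y, ENNReal.ofReal (g y / (1 + ‖y‖) ^ γ) ∂μ < ⊤) :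
    ∫⁻ y in {y | 1 < ‖y‖}, ENNReal.ofReal (g y / ‖y‖ ^ γ) ∂μ < ⊤ := by
  set C : ℝ := max 1 (2 ^ γ)
  have hpointwise : ∀ y ∈ {y : E | 1 < ‖y‖}, ENNReal.ofReal (g y / ‖y‖ ^ γ) ≤
      ENNReal.ofReal C * ENNReal.ofReal (g y / (1 + ‖y‖) ^ γ) := by
    intro y (hy : 1 < ‖y‖)
    have hy0 : 0 < ‖y‖ := one_pos.trans hy
    rw [← ENNReal.ofReal_mul (by positivity), ← mul_div_assoc]
    refine ENNReal.ofReal_le_ofReal ((div_le_div_iff₀ (by positivity) (by positivity)).2 ?_)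
    calc g y * (1 + ‖y‖) ^ γ ≤ g y * (C * ‖y‖ ^ γ) :=
          mul_le_mul_of_nonneg_left (one_add_rpow_le_max_mul_rpow hy.le γ) (hg y)
      _ = C * g y * ‖y‖ ^ γ := by ring
  calc ∫⁻ y in {y | 1 < ‖y‖}, ENNReal.ofReal (g y / ‖y‖ ^ γ) ∂μ
      ≤ ∫⁻ y in {y | 1 < ‖y‖},
          ENNReal.ofReal C * ENNReal.ofReal (g y / (1 + ‖y‖) ^ γ) ∂μ :=
        setLIntegral_mono' (measurableSet_lt measurable_const measurable_norm) hpointwise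
    _ ≤ ∫⁻ y, ENNReal.ofReal C * ENNReal.ofReal (g y / (1 + ‖y‖) ^ γ) ∂μ :=
        setLIntegral_le_lintegral _ _
    _ = ENNReal.ofReal C * ∫⁻ y, ENNReal.ofReal (g y / (1 + ‖y‖) ^ γ) ∂μ :=
        lintegral_const_mul' _ _ ENNReal.ofReal_ne_top
    _ < ⊤ := ENNReal.mul_lt_top ENNReal.ofReal_lt_top h

theorem lintegral_abs_mul_norm_rpow_le {E : Type*} [NormedAddCommGroup E]
    [MeasurableSpace E] [OpensMeasurableSpace E] {μ : Measure E} {p q : ℝ}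
    (hpq : p.HolderConjugate q) (γ s : ℝ) {f : E → ℝ} (hf : Measurable f) (hμ : ∀ᵐ y ∂μ, y ≠ 0) :
    ∫⁻ y, ENNReal.ofReal (|f y| * ‖y‖ ^ (-s)) ∂μ ≤
      (∫⁻ y, ENNReal.ofReal (|f y| ^ p / ‖y‖ ^ γ) ∂μ) ^ (1 / p) *
        (∫⁻ y, ENNReal.ofReal (‖y‖ ^ ((γ / p - s) * q)) ∂μ) ^ (1 / q) := by
  set F : E → ℝ≥0∞ := fun y ↦ ENNReal.ofReal (|f y| * ‖y‖ ^ (-(γ / p)))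
  set G : E → ℝ≥0∞ := fun y ↦ ENNReal.ofReal (‖y‖ ^ (γ / p - s))
  have hsplit : ∀ᵐ y ∂μ, ENNReal.ofReal (|f y| * ‖y‖ ^ (-s)) = (F * G) y :=
    hμ.mono fun y hy ↦ by
      have hy : 0 < ‖y‖ := norm_pos_iff.2 hy
      rw [Pi.mul_apply, ← ENNReal.ofReal_mul (by positivity), mul_assoc, ← Real.rpow_add hy]
      ring_nf
  have hF : ∀ᵐ y ∂μ, F y ^ p = ENNReal.ofReal (|f y| ^ p / ‖y‖ ^ γ) :=
    hμ.mono fun y hy ↦ by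
      have hy : 0 < ‖y‖ := norm_pos_iff.2 hy
      rw [ENNReal.ofReal_rpow_of_nonneg (by positivity) hpq.nonneg,
        Real.mul_rpow (abs_nonneg _) (by positivity), ← Real.rpow_mul hy.le, neg_mul,
        div_mul_cancel₀ γ hpq.ne_zero, Real.rpow_neg hy.le, div_eq_mul_inv]
  have hG : ∀ᵐ y ∂μ, G y ^ q = ENNReal.ofReal (‖y‖ ^ ((γ / p - s) * q)) :=
    .of_forall fun y ↦ by
      rw [ENNReal.ofReal_rpow_of_nonneg (by positivity) hpq.symm.nonneg,
        ← Real.rpow_mul (norm_nonneg y)]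
  calc ∫⁻ y, ENNReal.ofReal (|f y| * ‖y‖ ^ (-s)) ∂μ = ∫⁻ y, (F * G) y ∂μ :=
        lintegral_congr_ae hsplit
    _ ≤ (∫⁻ y, F y ^ p ∂μ) ^ (1 / p) * (∫⁻ y, G y ^ q ∂μ) ^ (1 / q) :=
      ENNReal.lintegral_mul_le_Lp_mul_Lq μ hpq (by fun_prop) (by fun_prop)
    _ = _ := by rw [lintegral_congr_ae hF, lintegral_congr_ae hG]

theorem norm_extendBdry {n : ℕ} (y' : EuclideanSpace ℝ (Fin (n - 1))) :
    ‖extendBdry (n := n) y'‖ = ‖y'‖ := by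
  cases n with
  | zero => simp [EuclideanSpace.norm_eq]
  | succ m =>
    simp only [EuclideanSpace.norm_eq, Fin.sum_univ_castSucc]
    simp [extendBdry, Fin.castSucc]

theorem surfaceArea_pos {n : ℕ} (hn : 0 < n) : 0 < surfaceArea n := by
  unfold surfaceArea
  have := Real.pi_pos
  have : 0 < Real.Gamma ((n : ℝ) / 2) := Real.Gamma_pos_of_pos (by positivity)
  positivity

theorem abs_halfSpacePoissonKernel_le {n : ℕ} (hn : 0 < n) {x : EuclideanSpace ℝ (Fin n)}
    (hx : 0 ≤ lastCoord x) {y' : EuclideanSpace ℝ (Fin (n - 1))} (hy : 2 * ‖x‖ < ‖y'‖) :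
    |halfSpacePoissonKernel n x y'| ≤
      2 ^ (n + 1) / surfaceArea n * lastCoord x * ‖y'‖ ^ (-(n : ℝ)) := by
  have hω := surfaceArea_pos hn
  have hy0 : 0 < ‖y'‖ := by linarith [norm_nonneg x]
  have hdist : ‖y'‖ / 2 ≤ ‖x - extendBdry y'‖ := by
    have := norm_sub_norm_le (extendBdry (n := n) y') x
    rw [norm_extendBdry, norm_sub_rev] at this
    linarith
  rw [halfSpacePoissonKernel, abs_of_nonneg (by positivity), Real.rpow_neg hy0.le,
    Real.rpow_natCast]
  calc 2 * lastCoord x / (surfaceArea n * ‖x - extendBdry y'‖ ^ n)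
      ≤ 2 * lastCoord x / (surfaceArea n * (‖y'‖ / 2) ^ n) := by gcongr
    _ = 2 ^ (n + 1) / surfaceArea n * lastCoord x * (‖y'‖ ^ n)⁻¹ := by
      rw [div_pow]
      field_simp
      ring

/-- The Hölder-dual weight `‖y'‖ ^ ((γ / p - n) * q)` is integrable at infinity in `ℝ^(n-1)`. -/
theorem holder_exponent_add_neg {n p q γ : ℝ} (hpq : p.HolderConjugate q)
    (hγ : γ < (n - 1) + p) : (γ / p - n) * q + (n - 1) < 0 := by
  have hp0 : p ≠ 0 := hpq.ne_zero
  have hsplit : (γ / p - n) * q + (n - 1) = q / p * (γ - ((n - 1) + p)) := by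
    field_simp
    linear_combination (1 - n) * hpq.mul_eq_add
  rw [hsplit]
  exact mul_neg_of_pos_of_neg (div_pos hpq.symm.pos hpq.pos) (by linarith)

theorem setLIntegral_norm_poissonKernel_mul_le {n : ℕ} (hn : 0 < n) {p q : ℝ}
    (hpq : p.HolderConjugate q) (γ : ℝ) {f : EuclideanSpace ℝ (Fin (n - 1)) → ℝ}
    (hf : Measurable f) {x : EuclideanSpace ℝ (Fin n)} (hx : 0 ≤ lastCoord x) :
    ∫⁻ y in {y : EuclideanSpace ℝ (Fin (n - 1)) | 2 * ‖x‖ < ‖y‖},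
        ENNReal.ofReal ‖halfSpacePoissonKernel n x y * f y‖ ≤
      ENNReal.ofReal (2 ^ (n + 1) / surfaceArea n * lastCoord x) *
        ((∫⁻ y in {y : EuclideanSpace ℝ (Fin (n - 1)) | 2 * ‖x‖ < ‖y‖},
            ENNReal.ofReal (|f y| ^ p / ‖y‖ ^ γ)) ^ (1 / p) *
          (∫⁻ y in {y : EuclideanSpace ℝ (Fin (n - 1)) | 2 * ‖x‖ < ‖y‖},
            ENNReal.ofReal (‖y‖ ^ ((γ / p - n) * q))) ^ (1 / q)) := by
  set S := {y : EuclideanSpace ℝ (Fin (n - 1)) | 2 * ‖x‖ < ‖y‖}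
  set K : ℝ := 2 ^ (n + 1) / surfaceArea n
  have hK : 0 < K := div_pos (by positivity) (surfaceArea_pos hn)
  have hS : MeasurableSet S := measurableSet_lt measurable_const measurable_norm
  calc ∫⁻ y in S, ENNReal.ofReal ‖halfSpacePoissonKernel n x y * f y‖
      ≤ ∫⁻ y in S, ENNReal.ofReal (K * lastCoord x) *
          ENNReal.ofReal (|f y| * ‖y‖ ^ (-(n : ℝ))) := by
        refine setLIntegral_mono' hS fun y (hy : 2 * ‖x‖ < ‖y‖) ↦ ?_
        rw [← ENNReal.ofReal_mul (by positivity), Real.norm_eq_abs, abs_mul]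
        refine ENNReal.ofReal_le_ofReal ?_
        calc |halfSpacePoissonKernel n x y| * |f y|
            ≤ K * lastCoord x * ‖y‖ ^ (-(n : ℝ)) * |f y| := by
              gcongr
              exact abs_halfSpacePoissonKernel_le hn hx hy
          _ = K * lastCoord x * (|f y| * ‖y‖ ^ (-(n : ℝ))) := by ring
    _ = ENNReal.ofReal (K * lastCoord x) *
          ∫⁻ y in S, ENNReal.ofReal (|f y| * ‖y‖ ^ (-(n : ℝ))) :=
        lintegral_const_mul' _ _ ENNReal.ofReal_ne_top
    _ ≤ _ := by
        gcongr
        exact lintegral_abs_mul_norm_rpow_le hpq γ n hf <|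
          ae_restrict_of_forall_mem hS fun y (hy : 2 * ‖x‖ < ‖y‖) ↦
            norm_pos_iff.1 (by linarith [norm_nonneg x])

theorem abs_setIntegral_poissonKernel_norm_gt_le {n : ℕ} (hn : 2 ≤ n) {p q γ : ℝ}
    (hpq : p.HolderConjugate q) (hγ : γ < ((n : ℝ) - 1) + p) :
    ∃ A : ℝ, 0 < A ∧
      ∀ f : EuclideanSpace ℝ (Fin (n - 1)) → ℝ, Measurable f →
        ∀ x ∈ upperHalfSpace n, 0 < ‖x‖ →
          (∫⁻ y' in {y' : EuclideanSpace ℝ (Fin (n - 1)) | 2 * ‖x‖ < ‖y'‖},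
            ENNReal.ofReal (|f y'| ^ p / ‖y'‖ ^ γ)) ≠ ⊤ →
          |∫ y' in {y' : EuclideanSpace ℝ (Fin (n - 1)) | 2 * ‖x‖ < ‖y'‖},
              halfSpacePoissonKernel n x y' * f y'| ≤
            A * lastCoord x * ‖x‖ ^ (γ / p + ((n : ℝ) - 1) / q - n) *
              (∫⁻ y' in {y' : EuclideanSpace ℝ (Fin (n - 1)) | 2 * ‖x‖ < ‖y'‖},
                ENNReal.ofReal (|f y'| ^ p / ‖y'‖ ^ γ)).toReal ^ (1 / p) := by
  have hp := hpq.pos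
  have hq := hpq.symm.pos
  have hdim : ((n - 1 : ℕ) : ℝ) = n - 1 := Nat.cast_pred (by omega)
  set e : ℝ := (γ / p - n) * q
  set E : ℝ := γ / p + ((n : ℝ) - 1) / q - n
  have he : e + ((n : ℝ) - 1) < 0 := holder_exponent_add_neg hpq hγ
  have hE : (e + ((n : ℝ) - 1)) * (1 / q) = E := by
    have hq0 : q ≠ 0 := hq.ne'
    simp only [e, E]
    field_simp
    ring
  obtain ⟨C, hC, htail⟩ :=
    exists_setLIntegral_norm_rpow_norm_gt_eq (m := n - 1) (by omega) (e := e) (by rwa [hdim])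
  set K : ℝ := 2 ^ (n + 1) / surfaceArea n
  have hK : 0 < K := div_pos (by positivity) (surfaceArea_pos (by omega))
  refine ⟨K * (C ^ (1 / q) * 2 ^ E), by positivity, fun f hf x hx hx0 hT ↦ ?_⟩
  set S := {y' : EuclideanSpace ℝ (Fin (n - 1)) | 2 * ‖x‖ < ‖y'‖}
  set T := ∫⁻ y' in S, ENNReal.ofReal (|f y'| ^ p / ‖y'‖ ^ γ)
  have hxn : 0 ≤ lastCoord x := le_of_lt hx
  rw [← Real.norm_eq_abs]
  refine (norm_integral_le_lintegral_norm _).trans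
    (ENNReal.toReal_le_of_le_ofReal (by positivity) ?_)
  calc ∫⁻ y in S, ENNReal.ofReal ‖halfSpacePoissonKernel n x y * f y‖
      ≤ ENNReal.ofReal (K * lastCoord x) *
          (T ^ (1 / p) * (∫⁻ y in S, ENNReal.ofReal (‖y‖ ^ e)) ^ (1 / q)) :=
        setLIntegral_norm_poissonKernel_mul_le (by omega) hpq γ hf hxn
    _ = ENNReal.ofReal (K * lastCoord x *
          (T.toReal ^ (1 / p) * (C * (2 * ‖x‖) ^ (e + ((n : ℝ) - 1))) ^ (1 / q))) := by
        rw [htail _ (by positivity), hdim,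
          ENNReal.ofReal_rpow_of_nonneg (by positivity) (by positivity),
          ← ENNReal.ofReal_toReal (ENNReal.rpow_ne_top_of_nonneg (by positivity) hT),
          ← ENNReal.toReal_rpow, ← ENNReal.ofReal_mul (by positivity),
          ← ENNReal.ofReal_mul (by positivity)]
    _ = ENNReal.ofReal (K * (C ^ (1 / q) * 2 ^ E) * lastCoord x * ‖x‖ ^ E *
          T.toReal ^ (1 / p)) := by
        rw [Real.mul_rpow hC.le (by positivity), ← Real.rpow_mul (by positivity), hE,
          Real.mul_rpow zero_le_two hx0.le]
        ring_nf

/-- Estimate for `v₃(x) = ∫_{|y'|>2|x|} P(x,y') f(y') dy'`: a bound by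
`A x_n |x|^{γ/p+(n-1)/q-n} (∫_{|y'|>2|x|} |f|^p/|y'|^γ)^{1/p}` with `A = A(n,p,γ)`,
and consequently `v₃(x) = o(x_n |x|^{γ/p+(n-1)/q-n})` as `|x| → ∞`, `x ∈ H`. -/
theorem stmt12 (n : ℕ) (hn : 3 ≤ n) (p q γ : ℝ) (hp : 1 < p)
    (hpq : 1 / p + 1 / q = 1) (hγ : γ < ((n : ℝ) - 1) + p) :
    ∃ A : ℝ, 0 < A ∧
      ∀ f : EuclideanSpace ℝ (Fin (n - 1)) → ℝ, Measurable f →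
        (∫⁻ y', ENNReal.ofReal (|f y'| ^ p / (1 + ‖y'‖) ^ γ) < ⊤) →
        (∀ x ∈ upperHalfSpace n, 2 ≤ ‖x‖ →
          |∫ y' in {y' : EuclideanSpace ℝ (Fin (n - 1)) | 2 * ‖x‖ < ‖y'‖},
              halfSpacePoissonKernel n x y' * f y'| ≤
            A * lastCoord x * ‖x‖ ^ (γ / p + ((n : ℝ) - 1) / q - n) *
              (∫⁻ y' in {y' : EuclideanSpace ℝ (Fin (n - 1)) | 2 * ‖x‖ < ‖y'‖},
                ENNReal.ofReal (|f y'| ^ p / ‖y'‖ ^ γ)).toReal ^ (1 / p)) ∧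
        ((fun x : EuclideanSpace ℝ (Fin n) =>
            ∫ y' in {y' : EuclideanSpace ℝ (Fin (n - 1)) | 2 * ‖x‖ < ‖y'‖},
              halfSpacePoissonKernel n x y' * f y')
          =o[comap (fun x => ‖x‖) atTop ⊓ 𝓟 (upperHalfSpace n)]
          fun x => lastCoord x * ‖x‖ ^ (γ / p + ((n : ℝ) - 1) / q - n)) := by
  have hpq' : p.HolderConjugate q :=
    Real.holderConjugate_iff.2 ⟨hp, by simpa only [one_div] using hpq⟩
  obtain ⟨A, hA, hbound⟩ := abs_setIntegral_poissonKernel_norm_gt_le (by omega) hpq' hγ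
  refine ⟨A, hA, fun f hf hfint ↦ ?_⟩
  set T : ℝ → ℝ≥0∞ := fun R ↦
    ∫⁻ y' in {y' : EuclideanSpace ℝ (Fin (n - 1)) | R < ‖y'‖},
      ENNReal.ofReal (|f y'| ^ p / ‖y'‖ ^ γ)
  have hT1 : T 1 ≠ ⊤ :=
    (setLIntegral_norm_gt_one_div_rpow_lt_top (fun _ ↦ by positivity) hfint).ne
  have hbd : ∀ x ∈ upperHalfSpace n, 2 ≤ ‖x‖ → _ := fun x hx hx2 ↦
    hbound f hf x hx (by linarith) <| ne_top_of_le_ne_top hT1 <|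
      lintegral_mono_set fun y (hy : 2 * ‖x‖ < ‖y‖) ↦ show 1 < ‖y‖ by linarith
  refine ⟨hbd, isLittleO_of_abs_le_mul_of_tendsto_zero A
    (h := fun x ↦ (T (2 * ‖x‖)).toReal ^ (1 / p)) ?_ ?_⟩
  · refine eventually_inf_principal.2 <|
      (tendsto_comap.eventually (eventually_ge_atTop 2)).mono fun x hx2 hx ↦ ?_
    simpa only [mul_assoc] using hbd x hx hx2
  · refine ENNReal.tendsto_toReal_rpow_zero ?_ (by positivity)
    exact (tendsto_setLIntegral_norm_gt_atTop volume _ hT1).comp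
      ((tendsto_comap.const_mul_atTop two_pos).mono_left inf_le_left)
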